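/- Let G' = (V, E') be a tree, and let q and p be tree-structured joint densities on (ℝ^d)^V over G' built from strictly positive consistent singleton densities q_i, p_i and pairwise densities q_{ij}, p_{ij}. Then KL(q || p) = Σ_{i∈V} KL(q_i || p_i) + Σ_{(i,j)∈E'} [KL(q_{ij} || p_{ij}) − KL(q_i || p_i) − KL(q_j || p_j)]. -/

import Mathlib

/-!
All densities being positive, `log (q / p)` splits along the factors of the two tree densities
into vertex terms `log (q_i / p_i)` and edge terms
`log (q_ij / p_ij) - log (q_i / p_i) - log (q_j / p_j)`, so the claim reduces to the fact that
the vertex and edge marginals of `q` are `q_i` and `q_ij`. These marginals are computed by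
integrating out the vertices of the tree one at a time, always a leaf: if `ℓ` hangs off `m`, the
only factor involving `z_ℓ` is the conditional density `q_ℓm(z_ℓ, z_m) / q_m(z_m)`, which
integrates to one by consistency.
-/

open MeasureTheory Finset
open scoped ENNReal

namespace SimpleGraph

variable {V : Type*} {G : SimpleGraph V}

theorem IsAcyclic.exists_adj_forall_adj_eq [Finite V] (hG : G.IsAcyclic) {a b : V}
    (hab : G.Adj a b) : ∃ u w, G.Adj u w ∧ ∀ x, G.Adj u x → x = w := by
  have : Nonempty V := ⟨a⟩
  obtain ⟨u, v, p, hp, hmax⟩ := Walk.exists_isPath_forall_isPath_length_le_length G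
  have hnil : ¬ p.Nil := fun hnil => by
    simpa [hnil.length_eq_zero] using hmax a b (.cons hab .nil) (by simp [hab.ne])
  refine ⟨u, p.snd, p.adj_snd hnil, fun x hx => hG.eq_snd_of_adj_start hp hx ?_⟩
  by_contra hxp
  simpa using hmax x v (.cons hx.symm p) (hp.cons hxp)

end SimpleGraph

theorem lmarginal_insert_ofReal_mul {V X : Type*} [DecidableEq V] [MeasurableSpace X]
    {μ : Measure X} [SigmaFinite μ] {S : Finset V} {ℓ : V} (hℓ : ℓ ∉ S)
    {W W' : (V → X) → ℝ} {κ : X → (V → X) → ℝ} (hW' : Measurable W')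
    (hκ : ∀ x z, 0 ≤ κ x z) (hfac : ∀ z x, W' (Function.update z ℓ x) = κ x z * W z)
    {h : (V → X) → ℝ≥0∞} (hh : Measurable h) :
    ∫⋯∫⁻_insert ℓ S, (fun z => ENNReal.ofReal (W' z) * h z) ∂(fun _ => μ)
      = ∫⋯∫⁻_S, (fun z => ENNReal.ofReal (W z) *
          ∫⁻ x, ENNReal.ofReal (κ x z) * h (Function.update z ℓ x) ∂μ) ∂(fun _ => μ) := by
  rw [lmarginal_insert' (fun z => ENNReal.ofReal (W' z) * h z) (hW'.ennreal_ofReal.mul hh) hℓ]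
  congr 1
  funext z
  rw [← lintegral_const_mul' _ _ ENNReal.ofReal_ne_top]
  refine lintegral_congr fun x => ?_
  rw [hfac, ENNReal.ofReal_mul (hκ _ _)]
  ring

theorem integrable_and_integral_mul_comp_eq {α β : Type*} [MeasurableSpace α]
    [MeasurableSpace β] {μ : Measure α} {ν : Measure β} {π : α → β} (hπ : Measurable π)
    {w : α → ℝ} {w' : β → ℝ} (hw : Measurable w) (hw' : Measurable w') (hw0 : ∀ a, 0 ≤ w a)
    (hw'0 : ∀ b, 0 ≤ w' b)
    (hmarg : ∀ g : β → ℝ≥0∞, Measurable g →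
      ∫⁻ a, ENNReal.ofReal (w a) * g (π a) ∂μ = ∫⁻ b, ENNReal.ofReal (w' b) * g b ∂ν)
    {f : β → ℝ} (hf : Measurable f) (hint : Integrable (fun b => w' b * f b) ν) :
    Integrable (fun a => w a * f (π a)) μ ∧ ∫ a, w a * f (π a) ∂μ = ∫ b, w' b * f b ∂ν := by
  have hmap : (μ.withDensity fun a => ((w a).toNNReal : ℝ≥0∞)).map π
      = ν.withDensity fun b => ((w' b).toNNReal : ℝ≥0∞) := by
    refine Measure.ext_of_lintegral _ fun g hg => ?_
    rw [lintegral_map hg hπ,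
      lintegral_withDensity_eq_lintegral_mul _ hw.real_toNNReal.coe_nnreal_ennreal
        (show Measurable fun a => g (π a) from hg.comp hπ),
      lintegral_withDensity_eq_lintegral_mul _ hw'.real_toNNReal.coe_nnreal_ennreal hg]
    exact hmarg g hg
  have hsmul (t : ℝ) (ht : 0 ≤ t) (y : ℝ) : t * y = t.toNNReal • y := by
    rw [NNReal.smul_def, Real.coe_toNNReal _ ht, smul_eq_mul]
  simp only [hsmul _ (hw0 _), hsmul _ (hw'0 _)] at hint ⊢
  rw [← integrable_withDensity_iff_integrable_smul hw'.real_toNNReal, ← hmap,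
    integrable_map_measure hf.aestronglyMeasurable hπ.aemeasurable] at hint
  rw [← integrable_withDensity_iff_integrable_smul hw.real_toNNReal,
    ← integral_withDensity_eq_integral_smul hw.real_toNNReal,
    ← integral_withDensity_eq_integral_smul hw'.real_toNNReal, ← hmap,
    integral_map hπ.aemeasurable hf.aestronglyMeasurable]
  exact ⟨hint, rfl⟩

theorem integral_sum_add_sum_sub_sub {α ι κ : Type*} [MeasurableSpace α] {μ : Measure α}
    {s : Finset ι} {t : Finset κ} {A : ι → α → ℝ} {B C D : κ → α → ℝ}
    (hA : ∀ i ∈ s, Integrable (A i) μ) (hB : ∀ k ∈ t, Integrable (B k) μ)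
    (hC : ∀ k ∈ t, Integrable (C k) μ) (hD : ∀ k ∈ t, Integrable (D k) μ) :
    ∫ a, (∑ i ∈ s, A i a + ∑ k ∈ t, (B k a - C k a - D k a)) ∂μ
      = ∑ i ∈ s, ∫ a, A i a ∂μ + ∑ k ∈ t, (∫ a, B k a ∂μ - ∫ a, C k a ∂μ - ∫ a, D k a ∂μ) := by
  have hBC (k) (hk : k ∈ t) : Integrable (fun a => B k a - C k a) μ := (hB k hk).sub (hC k hk)
  have hBCD (k) (hk : k ∈ t) : Integrable (fun a => B k a - C k a - D k a) μ :=
    (hBC k hk).sub (hD k hk)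
  rw [integral_add (integrable_finsetSum _ hA) (integrable_finsetSum _ hBCD),
    integral_finsetSum _ hA, integral_finsetSum _ hBCD]
  refine congrArg _ (sum_congr rfl fun k hk => ?_)
  rw [integral_sub (hBC k hk) (hD k hk), integral_sub (hB k hk) (hC k hk)]

section Peelable

variable {V : Type*} [DecidableEq V]

/-- `(S, F)` is assembled from the empty graph by adding isolated vertices and pendant edges,
i.e. it is a forest on `S` together with an order in which its vertices can be eliminated. -/
inductive IsPeelable : Finset V → Finset (V × V) → Prop
  | empty : IsPeelable ∅ ∅
  | insert_isolated {S F} {j : V} : IsPeelable S F → j ∉ S → IsPeelable (insert j S) F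
  | insert_leaf {S F} {ℓ m : V} {e : V × V} : IsPeelable S F → ℓ ∉ S → m ∈ S →
      (e = (ℓ, m) ∨ e = (m, ℓ)) → IsPeelable (insert ℓ S) (insert e F)

theorem IsPeelable.endpoints_mem {S : Finset V} {F : Finset (V × V)} (h : IsPeelable S F) :
    ∀ e ∈ F, e.1 ∈ S ∧ e.2 ∈ S := by
  induction h with
  | empty => simp
  | insert_isolated _ _ ih => exact fun e he => (ih e he).imp mem_insert_of_mem mem_insert_of_mem
  | insert_leaf _ _ hm he ih =>
    intro f hf
    rcases mem_insert.1 hf with rfl | hf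
    · rcases he with rfl | rfl <;> simp [hm]
    · exact (ih f hf).imp mem_insert_of_mem mem_insert_of_mem

theorem isPeelable_empty_right (S : Finset V) : IsPeelable S ∅ := by
  induction S using Finset.induction_on with
  | empty => exact .empty
  | insert j S hj ih => exact ih.insert_isolated hj

theorem exists_pendant_edge [Finite V] {G : SimpleGraph V} (hG : G.IsAcyclic)
    {F : Finset (V × V)} (hadj : ∀ e ∈ F, G.Adj e.1 e.2) (hswap : ∀ e ∈ F, e.swap ∉ F)
    (hF : F.Nonempty) :
    ∃ e ∈ F, ∃ u w, (e = (u, w) ∨ e = (w, u)) ∧ ∀ f ∈ F.erase e, f.1 ≠ u ∧ f.2 ≠ u := by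
  obtain ⟨e₀, he₀⟩ := hF
  set H := SimpleGraph.fromRel fun a b => (a, b) ∈ F
  have hHG : H ≤ G := fun a b ⟨_, hab⟩ => hab.elim (hadj _) fun h => (hadj _ h).symm
  obtain ⟨u, w, ⟨-, hwu⟩, hleaf⟩ :=
    (hG.anti hHG).exists_adj_forall_adj_eq (a := e₀.1) (b := e₀.2)
      ⟨(hadj _ he₀).ne, .inl he₀⟩
  obtain ⟨e, heF, he⟩ : ∃ e ∈ F, e = (u, w) ∨ e = (w, u) :=
    hwu.elim (fun h => ⟨_, h, .inl rfl⟩) fun h => ⟨_, h, .inr rfl⟩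
  refine ⟨e, heF, u, w, he, fun f hf => ?_⟩
  obtain ⟨hfe, hfF⟩ := mem_erase.1 hf
  have hne := (hadj f hfF).ne
  have h₁ : f.1 = u → f.2 = w := fun h => hleaf _ ⟨h ▸ hne, .inl (h ▸ hfF)⟩
  have h₂ : f.2 = u → f.1 = w := fun h => hleaf _ ⟨h ▸ hne.symm, .inr (h ▸ hfF)⟩
  have := hswap e heF
  grind

theorem isPeelable_of_isAcyclic [Finite V] {G : SimpleGraph V} (hG : G.IsAcyclic)
    {F : Finset (V × V)} (hadj : ∀ e ∈ F, G.Adj e.1 e.2) (hswap : ∀ e ∈ F, e.swap ∉ F)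
    {S : Finset V} (hFS : ∀ e ∈ F, e.1 ∈ S ∧ e.2 ∈ S) : IsPeelable S F := by
  induction F using Finset.strongInduction generalizing S with
  | H F ih =>
  rcases F.eq_empty_or_nonempty with rfl | hF
  · exact isPeelable_empty_right S
  obtain ⟨e, heF, u, w, he, hfresh⟩ := exists_pendant_edge hG hadj hswap hF
  obtain ⟨hu, hw, huw⟩ : u ∈ S ∧ w ∈ S ∧ u ≠ w := by
    rcases he with rfl | rfl
    exacts [⟨(hFS _ heF).1, (hFS _ heF).2, (hadj _ heF).ne⟩,
      ⟨(hFS _ heF).2, (hFS _ heF).1, (hadj _ heF).ne.symm⟩]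
  have hpeel : IsPeelable (S.erase u) (F.erase e) :=
    ih _ (erase_ssubset heF) (fun f hf => hadj f (mem_of_mem_erase hf))
      (fun f hf hf' => hswap f (mem_of_mem_erase hf) (mem_of_mem_erase hf'))
      fun f hf => ⟨mem_erase.2 ⟨(hfresh f hf).1, (hFS f (mem_of_mem_erase hf)).1⟩,
        mem_erase.2 ⟨(hfresh f hf).2, (hFS f (mem_of_mem_erase hf)).2⟩⟩
  simpa [insert_erase hu, insert_erase heF] using
    hpeel.insert_leaf (notMem_erase u S) (mem_erase.2 ⟨huw.symm, hw⟩) he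

end Peelable

section TreeDensity

variable {V X : Type*} (q1 : V → X → ℝ) (q2 : V → V → X → X → ℝ)

noncomputable def treeDensity (S : Finset V) (F : Finset (V × V)) (z : V → X) : ℝ :=
  (∏ i ∈ S, q1 i (z i)) *
    ∏ e ∈ F, q2 e.1 e.2 (z e.1) (z e.2) / (q1 e.1 (z e.1) * q1 e.2 (z e.2))

variable {q1 q2}

theorem measurable_treeDensity [MeasurableSpace X] (hq1 : ∀ i, Measurable (q1 i))
    (hq2 : ∀ i j, Measurable (Function.uncurry (q2 i j))) (S : Finset V) (F : Finset (V × V)) :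
    Measurable (treeDensity q1 q2 S F) := by
  have hpair (e : V × V) : Measurable fun z : V → X => (z e.1, z e.2) := by fun_prop
  exact (measurable_prod _ fun i _ => (hq1 i).comp (measurable_pi_apply i)).mul <|
    measurable_prod _ fun e _ => ((hq2 e.1 e.2).comp (hpair e)).div <|
      ((hq1 e.1).comp (measurable_pi_apply e.1)).mul ((hq1 e.2).comp (measurable_pi_apply e.2))

theorem treeDensity_pos (hq1 : ∀ i x, 0 < q1 i x) (hq2 : ∀ i j x y, 0 < q2 i j x y)
    (S : Finset V) (F : Finset (V × V)) (z : V → X) : 0 < treeDensity q1 q2 S F z :=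
  mul_pos (prod_pos fun i _ => hq1 i (z i))
    (prod_pos fun _ _ => div_pos (hq2 _ _ _ _) (mul_pos (hq1 _ _) (hq1 _ _)))

theorem log_treeDensity (hq1 : ∀ i x, 0 < q1 i x) (hq2 : ∀ i j x y, 0 < q2 i j x y)
    (S : Finset V) (F : Finset (V × V)) (z : V → X) :
    Real.log (treeDensity q1 q2 S F z)
      = (∑ i ∈ S, Real.log (q1 i (z i)))
        + ∑ e ∈ F, (Real.log (q2 e.1 e.2 (z e.1) (z e.2))
            - Real.log (q1 e.1 (z e.1)) - Real.log (q1 e.2 (z e.2))) := by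
  have hratio (e : V × V) :=
    div_pos (hq2 e.1 e.2 (z e.1) (z e.2)) (mul_pos (hq1 e.1 (z e.1)) (hq1 e.2 (z e.2)))
  rw [treeDensity, Real.log_mul (prod_pos fun i _ => hq1 i (z i)).ne'
      (prod_pos fun e _ => hratio e).ne', Real.log_prod fun i _ => (hq1 i (z i)).ne',
    Real.log_prod fun e _ => (hratio e).ne']
  congr 1
  refine sum_congr rfl fun e _ => ?_
  rw [Real.log_div (hq2 _ _ _ _).ne' (mul_pos (hq1 _ _) (hq1 _ _)).ne',
    Real.log_mul (hq1 _ _).ne' (hq1 _ _).ne', sub_sub]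

theorem log_treeDensity_div_treeDensity {p1 : V → X → ℝ} {p2 : V → V → X → X → ℝ}
    (hq1 : ∀ i x, 0 < q1 i x) (hq2 : ∀ i j x y, 0 < q2 i j x y)
    (hp1 : ∀ i x, 0 < p1 i x) (hp2 : ∀ i j x y, 0 < p2 i j x y)
    (S : Finset V) (F : Finset (V × V)) (z : V → X) :
    Real.log (treeDensity q1 q2 S F z / treeDensity p1 p2 S F z)
      = (∑ i ∈ S, Real.log (q1 i (z i) / p1 i (z i)))
        + ∑ e ∈ F, (Real.log (q2 e.1 e.2 (z e.1) (z e.2) / p2 e.1 e.2 (z e.1) (z e.2))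
            - Real.log (q1 e.1 (z e.1) / p1 e.1 (z e.1))
            - Real.log (q1 e.2 (z e.2) / p1 e.2 (z e.2))) := by
  rw [Real.log_div (treeDensity_pos hq1 hq2 S F z).ne' (treeDensity_pos hp1 hp2 S F z).ne',
    log_treeDensity hq1 hq2, log_treeDensity hp1 hp2]
  simp only [Real.log_div (hq1 _ _).ne' (hp1 _ _).ne',
    Real.log_div (hq2 _ _ _ _).ne' (hp2 _ _ _ _).ne', sum_sub_distrib]
  ring

section Update

variable [DecidableEq V]

theorem treeDensity_update_of_notMem {S : Finset V} {F : Finset (V × V)} {j : V} (hj : j ∉ S)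
    (hFS : ∀ e ∈ F, e.1 ∈ S ∧ e.2 ∈ S) (z : V → X) (x : X) :
    treeDensity q1 q2 S F (Function.update z j x) = treeDensity q1 q2 S F z := by
  have hne {i} (hi : i ∈ S) : i ≠ j := ne_of_mem_of_not_mem hi hj
  unfold treeDensity
  congr 1
  · exact prod_congr rfl fun i hi => by rw [Function.update_of_ne (hne hi)]
  · exact prod_congr rfl fun e he => by
      rw [Function.update_of_ne (hne (hFS e he).1), Function.update_of_ne (hne (hFS e he).2)]

theorem treeDensity_update_insert_isolated {S : Finset V} {F : Finset (V × V)} {j : V}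
    (hj : j ∉ S) (hFS : ∀ e ∈ F, e.1 ∈ S ∧ e.2 ∈ S) (z : V → X) (x : X) :
    treeDensity q1 q2 (insert j S) F (Function.update z j x)
      = q1 j x * treeDensity q1 q2 S F z := by
  rw [← treeDensity_update_of_notMem hj hFS z x, treeDensity, treeDensity, prod_insert hj,
    Function.update_self, mul_assoc]

theorem treeDensity_update_insert_leaf (hq1 : ∀ i x, 0 < q1 i x)
    (hsymm : ∀ i j x y, q2 i j x y = q2 j i y x) {S : Finset V} {F : Finset (V × V)}
    {ℓ m : V} {e : V × V} (hℓ : ℓ ∉ S) (hm : m ∈ S) (he : e = (ℓ, m) ∨ e = (m, ℓ))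
    (hFS : ∀ e ∈ F, e.1 ∈ S ∧ e.2 ∈ S) (z : V → X) (x : X) :
    treeDensity q1 q2 (insert ℓ S) (insert e F) (Function.update z ℓ x)
      = q2 ℓ m x (z m) / q1 m (z m) * treeDensity q1 q2 S F z := by
  have heF : e ∉ F := fun heF => by
    rcases he with rfl | rfl
    exacts [hℓ (hFS _ heF).1, hℓ (hFS _ heF).2]
  have hmℓ : m ≠ ℓ := ne_of_mem_of_not_mem hm hℓ
  rw [← treeDensity_update_of_notMem hℓ hFS z x, treeDensity, treeDensity, prod_insert hℓ,
    prod_insert heF]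
  have := (hq1 ℓ x).ne'
  rcases he with rfl | rfl <;> simp only [Function.update_self, Function.update_of_ne hmℓ]
  · field_simp
  · rw [hsymm m ℓ]; field_simp

end Update

end TreeDensity

section Marginals

variable {V X : Type*} [MeasurableSpace X]

structure IsConsistentFamily (μ : Measure X) (q1 : V → X → ℝ) (q2 : V → V → X → X → ℝ) :
    Prop where
  measurable_one : ∀ i, Measurable (q1 i)
  measurable_two : ∀ i j, Measurable (Function.uncurry (q2 i j))
  pos_one : ∀ i x, 0 < q1 i x
  pos_two : ∀ i j x y, 0 < q2 i j x y
  integral_one : ∀ i, ∫ x, q1 i x ∂μ = 1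
  symm : ∀ i j x y, q2 i j x y = q2 j i y x
  integral_two : ∀ i j x, ∫ y, q2 i j x y ∂μ = q1 i x

namespace IsConsistentFamily

variable {μ : Measure X} {q1 : V → X → ℝ} {q2 : V → V → X → X → ℝ}

theorem lintegral_one (hq : IsConsistentFamily μ q1 q2) (i : V) :
    ∫⁻ x, ENNReal.ofReal (q1 i x) ∂μ = 1 := by
  have hint : Integrable (q1 i) μ := .of_integral_ne_zero (by simp [hq.integral_one i])
  rw [← ofReal_integral_eq_lintegral_ofReal hint (ae_of_all _ fun x => (hq.pos_one i x).le),
    hq.integral_one, ENNReal.ofReal_one]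

theorem lintegral_two (hq : IsConsistentFamily μ q1 q2) (i j : V) (x : X) :
    ∫⁻ y, ENNReal.ofReal (q2 i j x y) ∂μ = ENNReal.ofReal (q1 i x) := by
  have hint : Integrable (q2 i j x) μ :=
    .of_integral_ne_zero (by simp [hq.integral_two i j x, (hq.pos_one i x).ne'])
  rw [← ofReal_integral_eq_lintegral_ofReal hint (ae_of_all _ fun y => (hq.pos_two i j x y).le),
    hq.integral_two]

theorem measurable_two_left (hq : IsConsistentFamily μ q1 q2) (i j : V) (y : X) :
    Measurable fun x => q2 i j x y :=
  (hq.measurable_two i j).comp (measurable_id.prodMk measurable_const)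

theorem measurable_two_right (hq : IsConsistentFamily μ q1 q2) (i j : V) (x : X) :
    Measurable (q2 i j x) :=
  (hq.measurable_two i j).comp measurable_prodMk_left

/-- `q2 i j x y / q1 j y` is the conditional density of `z i` given `z j = y`. -/
theorem lintegral_cond (hq : IsConsistentFamily μ q1 q2) (i j : V) (y : X) :
    ∫⁻ x, ENNReal.ofReal (q2 i j x y / q1 j y) ∂μ = 1 := by
  have hy := hq.pos_one j y
  simp_rw [ENNReal.ofReal_div_of_pos hy, div_eq_mul_inv]
  rw [lintegral_mul_const _ (hq.measurable_two_left i j y).ennreal_ofReal]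
  simp_rw [hq.symm i j _ y]
  rw [hq.lintegral_two, ENNReal.mul_inv_cancel (ENNReal.ofReal_pos.2 hy).ne' ENNReal.ofReal_ne_top]

theorem lintegral_cond_mul_const (hq : IsConsistentFamily μ q1 q2) (i j : V) (y : X)
    (c : ℝ≥0∞) : ∫⁻ x, ENNReal.ofReal (q2 i j x y / q1 j y) * c ∂μ = c := by
  rw [lintegral_mul_const _ ((hq.measurable_two_left i j y).div_const _).ennreal_ofReal,
    hq.lintegral_cond, one_mul]

theorem lintegral_one_mul_const (hq : IsConsistentFamily μ q1 q2) (i : V) (c : ℝ≥0∞) :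
    ∫⁻ x, ENNReal.ofReal (q1 i x) * c ∂μ = c := by
  rw [lintegral_mul_const _ (hq.measurable_one i).ennreal_ofReal, hq.lintegral_one, one_mul]

theorem nonempty (hq : IsConsistentFamily μ q1 q2) (i : V) : Nonempty X := by
  by_contra hX
  rw [not_nonempty_iff] at hX
  simpa [integral_of_isEmpty] using hq.integral_one i

variable [SFinite μ]

theorem lintegral_prod_mul_comp_fst (hq : IsConsistentFamily μ q1 q2) (i j : V)
    {g : X → ℝ≥0∞} (hg : Measurable g) :
    ∫⁻ r, ENNReal.ofReal (q2 i j r.1 r.2) * g r.1 ∂μ.prod μ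
      = ∫⁻ x, ENNReal.ofReal (q1 i x) * g x ∂μ := by
  rw [lintegral_prod (fun r => ENNReal.ofReal (q2 i j r.1 r.2) * g r.1)
    ((hq.measurable_two i j).ennreal_ofReal.mul (hg.comp measurable_fst)).aemeasurable]
  refine lintegral_congr fun x => ?_
  dsimp only
  rw [lintegral_mul_const _ (hq.measurable_two_right i j x).ennreal_ofReal, hq.lintegral_two]

theorem lintegral_one_mul_lintegral_cond (hq : IsConsistentFamily μ q1 q2) (i j : V)
    {g : X × X → ℝ≥0∞} (hg : Measurable g) :
    ∫⁻ y, ENNReal.ofReal (q1 j y) * ∫⁻ x, ENNReal.ofReal (q2 i j x y / q1 j y) * g (x, y) ∂μ ∂μ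
      = ∫⁻ r, ENNReal.ofReal (q2 i j r.1 r.2) * g r ∂μ.prod μ := by
  rw [lintegral_prod_symm (fun r => ENNReal.ofReal (q2 i j r.1 r.2) * g r)
    ((hq.measurable_two i j).ennreal_ofReal.mul hg).aemeasurable]
  refine lintegral_congr fun y => ?_
  rw [← lintegral_const_mul' _ _ ENNReal.ofReal_ne_top]
  refine lintegral_congr fun x => ?_
  rw [← mul_assoc, ← ENNReal.ofReal_mul (hq.pos_one j y).le,
    mul_div_cancel₀ _ (hq.pos_one j y).ne']

end IsConsistentFamily

end Marginals

section LMarginal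

variable {V X : Type*} [DecidableEq V] [MeasurableSpace X] {μ : Measure X} [SigmaFinite μ]
  {q1 : V → X → ℝ} {q2 : V → V → X → X → ℝ} {S : Finset V} {F : Finset (V × V)}

namespace IsConsistentFamily

theorem lmarginal_treeDensity_insert_isolated (hq : IsConsistentFamily μ q1 q2) {j : V}
    (hj : j ∉ S) (hFS : ∀ e ∈ F, e.1 ∈ S ∧ e.2 ∈ S) {h : (V → X) → ℝ≥0∞} (hh : Measurable h) :
    ∫⋯∫⁻_insert j S, (fun z => ENNReal.ofReal (treeDensity q1 q2 (insert j S) F z) * h z)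
        ∂(fun _ => μ)
      = ∫⋯∫⁻_S, (fun z => ENNReal.ofReal (treeDensity q1 q2 S F z) *
          ∫⁻ x, ENNReal.ofReal (q1 j x) * h (Function.update z j x) ∂μ) ∂(fun _ => μ) :=
  lmarginal_insert_ofReal_mul hj (measurable_treeDensity hq.measurable_one hq.measurable_two _ _)
    (fun x _ => (hq.pos_one j x).le) (treeDensity_update_insert_isolated hj hFS) hh

theorem lmarginal_treeDensity_insert_leaf (hq : IsConsistentFamily μ q1 q2) {ℓ m : V}
    {e : V × V} (hℓ : ℓ ∉ S) (hm : m ∈ S) (he : e = (ℓ, m) ∨ e = (m, ℓ))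
    (hFS : ∀ e ∈ F, e.1 ∈ S ∧ e.2 ∈ S) {h : (V → X) → ℝ≥0∞} (hh : Measurable h) :
    ∫⋯∫⁻_insert ℓ S, (fun z => ENNReal.ofReal (treeDensity q1 q2 (insert ℓ S) (insert e F) z)
        * h z) ∂(fun _ => μ)
      = ∫⋯∫⁻_S, (fun z => ENNReal.ofReal (treeDensity q1 q2 S F z) *
          ∫⁻ x, ENNReal.ofReal (q2 ℓ m x (z m) / q1 m (z m)) * h (Function.update z ℓ x) ∂μ)
          ∂(fun _ => μ) :=
  lmarginal_insert_ofReal_mul hℓ (measurable_treeDensity hq.measurable_one hq.measurable_two _ _)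
    (fun x z => (div_pos (hq.pos_two ℓ m x (z m)) (hq.pos_one m (z m))).le)
    (treeDensity_update_insert_leaf hq.pos_one hq.symm hℓ hm he hFS) hh

theorem lmarginal_treeDensity_insert_leaf_mul_pair (hq : IsConsistentFamily μ q1 q2) {ℓ m : V}
    {e : V × V} (hℓ : ℓ ∉ S) (hm : m ∈ S) (he : e = (ℓ, m) ∨ e = (m, ℓ))
    (hFS : ∀ e ∈ F, e.1 ∈ S ∧ e.2 ∈ S)
    (hmarg : ∀ G : X → ℝ≥0∞, Measurable G →
      ∫⋯∫⁻_S, (fun z => ENNReal.ofReal (treeDensity q1 q2 S F z) * G (z m)) ∂(fun _ => μ)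
        = fun _ => ∫⁻ y, ENNReal.ofReal (q1 m y) * G y ∂μ)
    {g : X × X → ℝ≥0∞} (hg : Measurable g) :
    ∫⋯∫⁻_insert ℓ S, (fun z => ENNReal.ofReal (treeDensity q1 q2 (insert ℓ S) (insert e F) z)
        * g (z ℓ, z m)) ∂(fun _ => μ)
      = fun _ => ∫⁻ r, ENNReal.ofReal (q2 ℓ m r.1 r.2) * g r ∂μ.prod μ := by
  have hmℓ : m ≠ ℓ := ne_of_mem_of_not_mem hm hℓ
  have hG : Measurable fun y => ∫⁻ x, ENNReal.ofReal (q2 ℓ m x y / q1 m y) * g (x, y) ∂μ :=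
    (((hq.measurable_two ℓ m).div ((hq.measurable_one m).comp measurable_snd)).ennreal_ofReal.mul
      hg).lintegral_prod_left'
  rw [hq.lmarginal_treeDensity_insert_leaf hℓ hm he hFS (h := fun z => g (z ℓ, z m))
    (hg.comp (by fun_prop))]
  simp only [Function.update_self, Function.update_of_ne hmℓ]
  rw [hmarg _ hG]
  exact funext fun _ => hq.lintegral_one_mul_lintegral_cond ℓ m hg

end IsConsistentFamily

namespace IsPeelable

theorem lmarginal_treeDensity_mul_const (hSF : IsPeelable S F) (hq : IsConsistentFamily μ q1 q2)
    (c : ℝ≥0∞) :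
    ∫⋯∫⁻_S, (fun z => ENNReal.ofReal (treeDensity q1 q2 S F z) * c) ∂(fun _ => μ) = fun _ => c := by
  induction hSF with
  | empty => simp [treeDensity]
  | insert_isolated hSF hj ih =>
    rw [hq.lmarginal_treeDensity_insert_isolated hj hSF.endpoints_mem measurable_const]
    simp_rw [hq.lintegral_one_mul_const]
    exact ih
  | insert_leaf hSF hℓ hm he ih =>
    rw [hq.lmarginal_treeDensity_insert_leaf hℓ hm he hSF.endpoints_mem measurable_const]
    simp_rw [hq.lintegral_cond_mul_const]
    exact ih

theorem lmarginal_treeDensity_mul_comp_eval (hSF : IsPeelable S F)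
    (hq : IsConsistentFamily μ q1 q2) {i : V} (hi : i ∈ S) {g : X → ℝ≥0∞} (hg : Measurable g) :
    ∫⋯∫⁻_S, (fun z => ENNReal.ofReal (treeDensity q1 q2 S F z) * g (z i)) ∂(fun _ => μ)
      = fun _ => ∫⁻ x, ENNReal.ofReal (q1 i x) * g x ∂μ := by
  induction hSF generalizing i g with
  | empty => simp at hi
  | @insert_isolated S F j hSF hj ih =>
    rw [hq.lmarginal_treeDensity_insert_isolated hj hSF.endpoints_mem (h := fun z => g (z i))
      (hg.comp (measurable_pi_apply i))]
    rcases eq_or_ne i j with rfl | hij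
    · simp only [Function.update_self]
      exact hSF.lmarginal_treeDensity_mul_const hq _
    · simp only [Function.update_of_ne hij, hq.lintegral_one_mul_const]
      exact ih (mem_of_mem_insert_of_ne hi hij) hg
  | @insert_leaf S F ℓ m e hSF hℓ hm he ih =>
    rcases eq_or_ne i ℓ with rfl | hiℓ
    · refine (hq.lmarginal_treeDensity_insert_leaf_mul_pair hℓ hm he hSF.endpoints_mem
        (fun _ hG => ih hm hG) (hg.comp measurable_fst)).trans ?_
      exact funext fun _ => hq.lintegral_prod_mul_comp_fst _ _ hg
    · rw [hq.lmarginal_treeDensity_insert_leaf hℓ hm he hSF.endpoints_mem (h := fun z => g (z i))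
        (hg.comp (measurable_pi_apply i))]
      simp only [Function.update_of_ne hiℓ, hq.lintegral_cond_mul_const]
      exact ih (mem_of_mem_insert_of_ne hi hiℓ) hg

theorem lmarginal_treeDensity_mul_comp_pair (hSF : IsPeelable S F)
    (hq : IsConsistentFamily μ q1 q2) {a b : V} (hab : (a, b) ∈ F) {g : X × X → ℝ≥0∞}
    (hg : Measurable g) :
    ∫⋯∫⁻_S, (fun z => ENNReal.ofReal (treeDensity q1 q2 S F z) * g (z a, z b)) ∂(fun _ => μ)
      = fun _ => ∫⁻ r, ENNReal.ofReal (q2 a b r.1 r.2) * g r ∂μ.prod μ := by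
  induction hSF generalizing a b g with
  | empty => simp at hab
  | @insert_isolated S F j hSF hj ih =>
    have ha : a ≠ j := ne_of_mem_of_not_mem (hSF.endpoints_mem _ hab).1 hj
    have hb : b ≠ j := ne_of_mem_of_not_mem (hSF.endpoints_mem _ hab).2 hj
    rw [hq.lmarginal_treeDensity_insert_isolated hj hSF.endpoints_mem (h := fun z => g (z a, z b))
      (hg.comp (by fun_prop))]
    simp only [Function.update_of_ne ha, Function.update_of_ne hb, hq.lintegral_one_mul_const]
    exact ih hab hg
  | @insert_leaf S F ℓ m e hSF hℓ hm he ih =>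
    have hFS := hSF.endpoints_mem
    have hvert (G : X → ℝ≥0∞) (hG : Measurable G) :=
      hSF.lmarginal_treeDensity_mul_comp_eval hq hm hG
    rcases mem_insert.1 hab with rfl | hab
    · rcases he with h | h <;> obtain ⟨rfl, rfl⟩ := Prod.mk.inj h
      · exact hq.lmarginal_treeDensity_insert_leaf_mul_pair hℓ hm (.inl rfl) hFS hvert hg
      · refine (hq.lmarginal_treeDensity_insert_leaf_mul_pair hℓ hm (.inr rfl) hFS hvert
          (hg.comp measurable_swap)).trans (funext fun _ => ?_)
        rw [← lintegral_prod_swap]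
        simp only [Prod.fst_swap, Prod.snd_swap, Prod.swap_swap, Function.comp_apply, hq.symm b a]
    · have ha : a ≠ ℓ := ne_of_mem_of_not_mem (hFS _ hab).1 hℓ
      have hb : b ≠ ℓ := ne_of_mem_of_not_mem (hFS _ hab).2 hℓ
      rw [hq.lmarginal_treeDensity_insert_leaf hℓ hm he hFS (h := fun z => g (z a, z b))
        (hg.comp (by fun_prop))]
      simp only [Function.update_of_ne ha, Function.update_of_ne hb, hq.lintegral_cond_mul_const]
      exact ih hab hg

end IsPeelable

end LMarginal

namespace IsPeelable

variable {V X : Type*} [Fintype V] [DecidableEq V] [MeasureSpace X]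
  [SigmaFinite (volume : Measure X)] {q1 : V → X → ℝ} {q2 : V → V → X → X → ℝ}
  {F : Finset (V × V)}

theorem integrable_and_integral_treeDensity_mul_comp_eval (hF : IsPeelable univ F)
    (hq : IsConsistentFamily volume q1 q2) (i : V) {f : X → ℝ} (hf : Measurable f)
    (hint : Integrable fun x => q1 i x * f x) :
    Integrable (fun z : V → X => treeDensity q1 q2 univ F z * f (z i)) ∧
      ∫ z : V → X, treeDensity q1 q2 univ F z * f (z i) = ∫ x, q1 i x * f x := by
  have : Nonempty X := hq.nonempty i
  refine integrable_and_integral_mul_comp_eq (measurable_pi_apply i)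
    (measurable_treeDensity hq.measurable_one hq.measurable_two _ _) (hq.measurable_one i)
    (fun z => (treeDensity_pos hq.pos_one hq.pos_two _ _ z).le) (fun x => (hq.pos_one i x).le)
    (fun g hg => ?_) hf hint
  exact (lintegral_eq_lmarginal_univ (Classical.arbitrary _)).trans
    (congrFun (hF.lmarginal_treeDensity_mul_comp_eval hq (mem_univ i) hg) _)

theorem integrable_and_integral_treeDensity_mul_comp_pair (hF : IsPeelable univ F)
    (hq : IsConsistentFamily volume q1 q2) {a b : V} (hab : (a, b) ∈ F) {f : X → X → ℝ}
    (hf : Measurable (Function.uncurry f))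
    (hint : Integrable fun r : X × X => q2 a b r.1 r.2 * f r.1 r.2) :
    Integrable (fun z : V → X => treeDensity q1 q2 univ F z * f (z a) (z b)) ∧
      ∫ z : V → X, treeDensity q1 q2 univ F z * f (z a) (z b)
        = ∫ r : X × X, q2 a b r.1 r.2 * f r.1 r.2 := by
  have : Nonempty X := hq.nonempty a
  refine integrable_and_integral_mul_comp_eq (π := fun z : V → X => (z a, z b))
    (f := Function.uncurry f) (by fun_prop)
    (measurable_treeDensity hq.measurable_one hq.measurable_two _ _) (hq.measurable_two a b)
    (fun z => (treeDensity_pos hq.pos_one hq.pos_two _ _ z).le)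
    (fun r => (hq.pos_two a b r.1 r.2).le) (fun g hg => ?_) hf hint
  exact (lintegral_eq_lmarginal_univ (Classical.arbitrary _)).trans
    (congrFun (hF.lmarginal_treeDensity_mul_comp_pair hq hab hg) _)

end IsPeelable

theorem tree_kl_decomposition_general {V : Type*} [Fintype V]
    (d : ℕ) (E : Finset (V × V))
    (T : SimpleGraph V)
    (hT : T.IsTree)
    (hTE : ∀ a b : V, T.Adj a b ↔ ((a, b) ∈ E ∨ (b, a) ∈ E))
    (hEonce : ∀ e ∈ E, (e.2, e.1) ∉ E)
    (q1 p1 : V → (Fin d → ℝ) → ℝ)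
    (q2 p2 : V → V → (Fin d → ℝ) → (Fin d → ℝ) → ℝ)
    (hq1meas : ∀ i, Measurable (q1 i)) (hp1meas : ∀ i, Measurable (p1 i))
    (hq2meas : ∀ i j, Measurable (fun r : (Fin d → ℝ) × (Fin d → ℝ) => q2 i j r.1 r.2))
    (hp2meas : ∀ i j, Measurable (fun r : (Fin d → ℝ) × (Fin d → ℝ) => p2 i j r.1 r.2))
    (hq1pos : ∀ i x, 0 < q1 i x) (hp1pos : ∀ i x, 0 < p1 i x)
    (hq2pos : ∀ i j x y, 0 < q2 i j x y) (hp2pos : ∀ i j x y, 0 < p2 i j x y)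
    (hq1int : ∀ i, ∫ x, q1 i x = 1)
    (hqsymm : ∀ i j x y, q2 i j x y = q2 j i y x)
    (hqcons : ∀ i j x, ∫ y, q2 i j x y = q1 i x)
    (q p : (V → (Fin d → ℝ)) → ℝ)
    (hq : ∀ z, q z = (∏ i, q1 i (z i)) *
      ∏ e ∈ E, q2 e.1 e.2 (z e.1) (z e.2) / (q1 e.1 (z e.1) * q1 e.2 (z e.2)))
    (hp : ∀ z, p z = (∏ i, p1 i (z i)) *
      ∏ e ∈ E, p2 e.1 e.2 (z e.1) (z e.2) / (p1 e.1 (z e.1) * p1 e.2 (z e.2)))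
    (hKL1 : ∀ i, Integrable (fun x => q1 i x * Real.log (q1 i x / p1 i x)))
    (hKL2 : ∀ i j, Integrable (fun r : (Fin d → ℝ) × (Fin d → ℝ) =>
      q2 i j r.1 r.2 * Real.log (q2 i j r.1 r.2 / p2 i j r.1 r.2))) :
    ∫ z : V → (Fin d → ℝ), q z * Real.log (q z / p z)
      = (∑ i, ∫ x, q1 i x * Real.log (q1 i x / p1 i x))
        + ∑ e ∈ E,
            ((∫ r : (Fin d → ℝ) × (Fin d → ℝ),
              q2 e.1 e.2 r.1 r.2 * Real.log (q2 e.1 e.2 r.1 r.2 / p2 e.1 e.2 r.1 r.2))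
            - (∫ x, q1 e.1 x * Real.log (q1 e.1 x / p1 e.1 x))
            - (∫ x, q1 e.2 x * Real.log (q1 e.2 x / p1 e.2 x))) := by
  classical
  obtain rfl : q = treeDensity q1 q2 univ E := funext hq
  obtain rfl : p = treeDensity p1 p2 univ E := funext hp
  have hfam : IsConsistentFamily volume q1 q2 :=
    ⟨hq1meas, hq2meas, hq1pos, hq2pos, hq1int, hqsymm, hqcons⟩
  have hE : IsPeelable univ E := isPeelable_of_isAcyclic hT.isAcyclic
    (fun e he => (hTE _ _).2 (.inl he)) hEonce fun _ _ => ⟨mem_univ _, mem_univ _⟩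
  have hvert (i : V) := hE.integrable_and_integral_treeDensity_mul_comp_eval hfam i
    (f := fun x => Real.log (q1 i x / p1 i x))
    (Real.measurable_log.comp ((hq1meas i).div (hp1meas i))) (hKL1 i)
  have hedge (e : V × V) (he : e ∈ E) :=
    hE.integrable_and_integral_treeDensity_mul_comp_pair hfam he
      (f := fun x y => Real.log (q2 e.1 e.2 x y / p2 e.1 e.2 x y))
      (Real.measurable_log.comp ((hq2meas e.1 e.2).div (hp2meas e.1 e.2))) (hKL2 e.1 e.2)
  simp_rw [log_treeDensity_div_treeDensity hq1pos hq2pos hp1pos hp2pos, mul_add, mul_sum, mul_sub]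
  rw [integral_sum_add_sum_sub_sub (fun i _ => (hvert i).1) (fun e he => (hedge e he).1)
    (fun e _ => (hvert e.1).1) (fun e _ => (hvert e.2).1)]
  congr 1
  · exact sum_congr rfl fun i _ => (hvert i).2
  · exact sum_congr rfl fun e he => by rw [(hedge e he).2, (hvert e.1).2, (hvert e.2).2]

/-- KL decomposition over trees (justifying Equation 7 of the paper): for
tree-structured joint densities `q` and `p` over the same finite tree,
`KL(q‖p) = ∑_i KL(qᵢ‖pᵢ) + ∑_{(i,j)∈E} [KL(q_{ij}‖p_{ij}) − KL(qᵢ‖pᵢ) − KL(qⱼ‖pⱼ)]`. -/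
theorem tree_kl_decomposition {V : Type*} [Fintype V] [DecidableEq V]
    (d : ℕ) (E : Finset (V × V))
    (T : SimpleGraph V)
    (hT : T.IsTree)
    (hTE : ∀ a b : V, T.Adj a b ↔ ((a, b) ∈ E ∨ (b, a) ∈ E))
    (hEirr : ∀ e ∈ E, e.1 ≠ e.2)
    (hEonce : ∀ e ∈ E, (e.2, e.1) ∉ E)
    (q1 p1 : V → (Fin d → ℝ) → ℝ)
    (q2 p2 : V → V → (Fin d → ℝ) → (Fin d → ℝ) → ℝ)
    (hq1meas : ∀ i, Measurable (q1 i)) (hp1meas : ∀ i, Measurable (p1 i))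
    (hq2meas : ∀ i j, Measurable (fun r : (Fin d → ℝ) × (Fin d → ℝ) => q2 i j r.1 r.2))
    (hp2meas : ∀ i j, Measurable (fun r : (Fin d → ℝ) × (Fin d → ℝ) => p2 i j r.1 r.2))
    (hq1pos : ∀ i x, 0 < q1 i x) (hp1pos : ∀ i x, 0 < p1 i x)
    (hq2pos : ∀ i j x y, 0 < q2 i j x y) (hp2pos : ∀ i j x y, 0 < p2 i j x y)
    (hq1int : ∀ i, ∫ x, q1 i x = 1) (hp1int : ∀ i, ∫ x, p1 i x = 1)
    (hqsymm : ∀ i j x y, q2 i j x y = q2 j i y x)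
    (hpsymm : ∀ i j x y, p2 i j x y = p2 j i y x)
    (hqcons : ∀ i j x, ∫ y, q2 i j x y = q1 i x)
    (hpcons : ∀ i j x, ∫ y, p2 i j x y = p1 i x)
    (q p : (V → (Fin d → ℝ)) → ℝ)
    (hq : ∀ z, q z = (∏ i, q1 i (z i)) *
      ∏ e ∈ E, q2 e.1 e.2 (z e.1) (z e.2) / (q1 e.1 (z e.1) * q1 e.2 (z e.2)))
    (hp : ∀ z, p z = (∏ i, p1 i (z i)) *
      ∏ e ∈ E, p2 e.1 e.2 (z e.1) (z e.2) / (p1 e.1 (z e.1) * p1 e.2 (z e.2)))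
    (hKLjoint : Integrable (fun z => q z * Real.log (q z / p z)))
    (hKL1 : ∀ i, Integrable (fun x => q1 i x * Real.log (q1 i x / p1 i x)))
    (hKL2 : ∀ i j, Integrable (fun r : (Fin d → ℝ) × (Fin d → ℝ) =>
      q2 i j r.1 r.2 * Real.log (q2 i j r.1 r.2 / p2 i j r.1 r.2))) :
    ∫ z : V → (Fin d → ℝ), q z * Real.log (q z / p z)
      = (∑ i, ∫ x, q1 i x * Real.log (q1 i x / p1 i x))
        + ∑ e ∈ E,
            ((∫ r : (Fin d → ℝ) × (Fin d → ℝ),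
              q2 e.1 e.2 r.1 r.2 * Real.log (q2 e.1 e.2 r.1 r.2 / p2 e.1 e.2 r.1 r.2))
            - (∫ x, q1 e.1 x * Real.log (q1 e.1 x / p1 e.1 x))
            - (∫ x, q1 e.2 x * Real.log (q1 e.2 x / p1 e.2 x))) :=
  tree_kl_decomposition_general d E T hT hTE hEonce q1 p1 q2 p2 hq1meas hp1meas hq2meas hp2meas
    hq1pos hp1pos hq2pos hp2pos hq1int hqsymm hqcons q p hq hp hKL1 hKL2
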